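/- arXiv:2212.08941 — 4 statements merged into one kernel-verified Lean document; each statement's English description precedes it below -/
import Mathlib

section
/- Let H and W be real separable Hilbert spaces with Hilbert bases (e_n)_{n∈ℕ} of H and (g_n)_{n∈ℕ} of W, let μ be a finite Borel measure on H with finite second moment, let A : H → W be a continuous linear map, and let ε > 0. Then there exist d, m ∈ ℕ and a continuous function f : ℝ^d → ℝ^m such that the DeepONet F = E_{W,m} ∘ f ∘ P_{H,d} satisfies ∫_H ‖A x − F(x)‖_W² dμ(x) < ε. -/
open MeasureTheory Filter Topology Finset
open scoped RealInnerProductSpace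

/-- The projection map `P_{H,d} : H → ℝ^d`, `x ↦ (⟪x,e₁⟫, …, ⟪x,e_d⟫)`,
associated with a Hilbert basis `e` of `H`. -/
noncomputable def projMap {H : Type*} [NormedAddCommGroup H] [InnerProductSpace ℝ H]
    (e : HilbertBasis ℕ ℝ H) (d : ℕ) (x : H) : EuclideanSpace ℝ (Fin d) :=
  WithLp.toLp 2 (fun i : Fin d => ⟪x, e i⟫)

/-- The extension map `E_{W,m} : ℝ^m → W`, `a ↦ ∑_{i=1}^m aᵢ gᵢ`,
associated with a Hilbert basis `g` of `W`. -/
noncomputable def extMap {W : Type*} [NormedAddCommGroup W] [InnerProductSpace ℝ W]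
    (g : HilbertBasis ℕ ℝ W) (m : ℕ) (a : EuclideanSpace ℝ (Fin m)) : W :=
  ∑ i : Fin m, a i • g i

/-!
The DeepONet with encoder `P_{H,n}`, decoder `E_{W,n}` and core `P_{W,n} ∘ A ∘ E_{H,n}` realises
`Qₙ ∘ A ∘ Pₙ`, where `Pₙ` and `Qₙ` are the truncations of `H` and `W` to the first `n` basis
vectors. These are contractions converging strongly to the identity, so `Qₙ (A (Pₙ x)) → A x` for
every `x`, while `‖A x - Qₙ (A (Pₙ x))‖² ≤ 4 ‖A‖² ‖x‖²`. Since `μ` has finite second moment,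
dominated convergence drives the mean squared error to `0`.
-/

namespace HilbertBasis

variable {ι 𝕜 E : Type*} [RCLike 𝕜] [NormedAddCommGroup E] [InnerProductSpace 𝕜 E]

noncomputable def truncation (b : HilbertBasis ι 𝕜 E) (s : Finset ι) : E →L[𝕜] E :=
  ∑ i ∈ s, InnerProductSpace.rankOne 𝕜 (b i) (b i)

theorem truncation_apply (b : HilbertBasis ι 𝕜 E) (s : Finset ι) (x : E) :
    b.truncation s x = ∑ i ∈ s, inner 𝕜 (b i) x • b i := by
  simp [truncation]

theorem norm_truncation_apply_le (b : HilbertBasis ι 𝕜 E) (s : Finset ι) (x : E) :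
    ‖b.truncation s x‖ ≤ ‖x‖ := by
  have hsq : ‖b.truncation s x‖ ^ 2 = ∑ i ∈ s, ‖inner 𝕜 (b i) x‖ ^ 2 := by
    rw [@norm_sq_eq_re_inner 𝕜, truncation_apply, b.orthonormal.inner_sum, map_sum]
    simp only [RCLike.conj_mul, ← RCLike.ofReal_pow, RCLike.ofReal_re]
  refine le_of_pow_le_pow_left₀ two_ne_zero (norm_nonneg x) ?_
  exact hsq ▸ b.orthonormal.sum_inner_products_le x

theorem norm_truncation_le (b : HilbertBasis ι 𝕜 E) (s : Finset ι) : ‖b.truncation s‖ ≤ 1 :=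
  ContinuousLinearMap.opNorm_le_bound _ zero_le_one fun x => by
    simpa using b.norm_truncation_apply_le s x

theorem tendsto_truncation_range (b : HilbertBasis ℕ 𝕜 E) (x : E) :
    Tendsto (fun n => b.truncation (range n) x) atTop (𝓝 x) := by
  simpa [truncation_apply, b.repr_apply_apply] using (b.hasSum_repr x).tendsto_sum_nat

end HilbertBasis

theorem ContinuousLinearMap.tendsto_apply_of_norm_le {𝕜 E F α : Type*}
    [NontriviallyNormedField 𝕜]
    [SeminormedAddCommGroup E] [NormedSpace 𝕜 E] [SeminormedAddCommGroup F] [NormedSpace 𝕜 F]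
    {l : Filter α} {T : α → E →L[𝕜] F} {T₀ : E →L[𝕜] F} {C : ℝ} (hT : ∀ a, ‖T a‖ ≤ C)
    (hT₀ : ∀ y, Tendsto (fun a => T a y) l (𝓝 (T₀ y))) {y : α → E} {y₀ : E}
    (hy : Tendsto y l (𝓝 y₀)) : Tendsto (fun a => T a (y a)) l (𝓝 (T₀ y₀)) := by
  have hsmall : Tendsto (fun a => T a (y a - y₀)) l (𝓝 0) := by
    refine squeeze_zero_norm (a := fun a => C * ‖y a - y₀‖) (fun a => ?_) ?_
    · exact ((T a).le_opNorm _).trans (mul_le_mul_of_nonneg_right (hT a) (norm_nonneg _))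
    · simpa using (tendsto_iff_norm_sub_tendsto_zero.mp hy).const_mul C
  simpa [map_sub] using hsmall.add (hT₀ y₀)

theorem ContinuousLinearMap.norm_apply_sq_le {𝕜 E F : Type*} [NontriviallyNormedField 𝕜]
    [SeminormedAddCommGroup E] [NormedSpace 𝕜 E] [SeminormedAddCommGroup F] [NormedSpace 𝕜 F]
    (L : E →L[𝕜] F) {C : ℝ} (hL : ‖L‖ ≤ C) (x : E) : ‖L x‖ ^ 2 ≤ C ^ 2 * ‖x‖ ^ 2 := by
  rw [← mul_pow]
  exact pow_le_pow_left₀ (norm_nonneg _) (L.le_of_opNorm_le hL x) 2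

section SquareIntegral

variable {𝕜 E F : Type*} [NontriviallyNormedField 𝕜] [NormedAddCommGroup E] [NormedSpace 𝕜 E]
  [NormedAddCommGroup F] [NormedSpace 𝕜 F] [MeasurableSpace E] [OpensMeasurableSpace E]
  {μ : Measure E}

theorem integrable_norm_apply_sq (hμ : Integrable (fun x => ‖x‖ ^ 2) μ) (L : E →L[𝕜] F) :
    Integrable (fun x => ‖L x‖ ^ 2) μ :=
  (hμ.const_mul (‖L‖ ^ 2)).mono' (L.continuous.norm.pow 2).aestronglyMeasurable <|
    Eventually.of_forall fun x => by
      rw [Real.norm_of_nonneg (by positivity)]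
      exact L.norm_apply_sq_le le_rfl x

theorem tendsto_integral_norm_sub_apply_sq {α : Type*} {l : Filter α} [l.IsCountablyGenerated]
    (hμ : Integrable (fun x => ‖x‖ ^ 2) μ) {T : α → E →L[𝕜] F} {T₀ : E →L[𝕜] F} {C : ℝ}
    (hT : ∀ a, ‖T a‖ ≤ C) (hlim : ∀ x, Tendsto (fun a => T a x) l (𝓝 (T₀ x))) :
    Tendsto (fun a => ∫ x, ‖T₀ x - T a x‖ ^ 2 ∂μ) l (𝓝 0) := by
  have hbound : ∀ a, ‖T₀ - T a‖ ≤ ‖T₀‖ + C := fun a =>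
    (norm_sub_le _ _).trans (by gcongr; exact hT a)
  have hlim0 : ∀ x, Tendsto (fun a => ‖T₀ x - T a x‖ ^ 2) l (𝓝 0) := fun x => by
    simpa [norm_sub_rev] using (tendsto_iff_norm_sub_tendsto_zero.mp (hlim x)).pow 2
  simpa using tendsto_integral_filter_of_dominated_convergence
    (F := fun a x => ‖T₀ x - T a x‖ ^ 2) _
    (Eventually.of_forall fun a => ((T₀ - T a).continuous.norm.pow 2).aestronglyMeasurable)
    (Eventually.of_forall fun a => Eventually.of_forall fun x => by
      rw [Real.norm_of_nonneg (by positivity)]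
      exact (T₀ - T a).norm_apply_sq_le (hbound a) x)
    (hμ.const_mul _) (Eventually.of_forall hlim0)

end SquareIntegral

section DeepONet

variable {H : Type*} [NormedAddCommGroup H] [InnerProductSpace ℝ H]

theorem continuous_projMap (e : HilbertBasis ℕ ℝ H) (d : ℕ) : Continuous (projMap e d) :=
  (PiLp.continuous_toLp 2 _).comp <| continuous_pi fun _ => continuous_id.inner continuous_const

theorem continuous_extMap (g : HilbertBasis ℕ ℝ H) (m : ℕ) : Continuous (extMap g m) :=
  continuous_finsetSum _ fun i _ =>
    ((continuous_apply i).comp (PiLp.continuous_ofLp 2 _)).smul continuous_const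

theorem extMap_projMap (e : HilbertBasis ℕ ℝ H) (n : ℕ) (x : H) :
    extMap e n (projMap e n x) = e.truncation (range n) x := by
  simp only [extMap, projMap, PiLp.toLp_apply, e.truncation_apply]
  exact (Fin.sum_univ_eq_sum_range (fun i => ⟪x, e i⟫ • e i) n).trans
    (sum_congr rfl fun i _ => by rw [real_inner_comm])

end DeepONet

theorem stmt_3_general (H W : Type*) [NormedAddCommGroup H] [InnerProductSpace ℝ H]
    [NormedAddCommGroup W] [InnerProductSpace ℝ W]
    [MeasurableSpace H] [BorelSpace H]
    (e : HilbertBasis ℕ ℝ H) (g : HilbertBasis ℕ ℝ W)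
    (μ : Measure H)
    (hμ : Integrable (fun x : H => ‖x‖ ^ 2) μ)
    (A : H →L[ℝ] W) (ε : ℝ) (hε : 0 < ε) :
    ∃ (d m : ℕ) (f : EuclideanSpace ℝ (Fin d) → EuclideanSpace ℝ (Fin m)),
      Continuous f ∧
      Integrable (fun x : H => ‖A x - extMap g m (f (projMap e d x))‖ ^ 2) μ ∧
      ∫ x : H, ‖A x - extMap g m (f (projMap e d x))‖ ^ 2 ∂μ < ε := by
  set T : ℕ → H →L[ℝ] W := fun n => g.truncation (range n) ∘L A ∘L e.truncation (range n)
  have hT : ∀ n, ‖T n‖ ≤ ‖A‖ := fun n => by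
    calc ‖T n‖ ≤ ‖g.truncation (range n)‖ * (‖A‖ * ‖e.truncation (range n)‖) :=
          (ContinuousLinearMap.opNorm_comp_le _ _).trans
            (by gcongr; exact ContinuousLinearMap.opNorm_comp_le _ _)
      _ ≤ 1 * (‖A‖ * 1) := by
          gcongr
          exacts [g.norm_truncation_le _, e.norm_truncation_le _]
      _ = ‖A‖ := by ring
  have hlim : ∀ x, Tendsto (fun n => T n x) atTop (𝓝 (A x)) := fun x =>
    ContinuousLinearMap.tendsto_apply_of_norm_le (T₀ := .id ℝ W)
      (fun n => g.norm_truncation_le (range n)) g.tendsto_truncation_range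
      ((A.continuous.tendsto x).comp (e.tendsto_truncation_range x))
  have hF : ∀ n x, extMap g n ((projMap g n ∘ A ∘ extMap e n) (projMap e n x)) = T n x := by
    simp [extMap_projMap, T]
  obtain ⟨n, hn⟩ :=
    ((tendsto_integral_norm_sub_apply_sq hμ hT hlim).eventually (gt_mem_nhds hε)).exists
  refine ⟨n, n, projMap g n ∘ A ∘ extMap e n, ?_, ?_, ?_⟩
  · exact (continuous_projMap g n).comp (A.continuous.comp (continuous_extMap e n))
  · simp only [hF]
    exact integrable_norm_apply_sq hμ (A - T n)
  · simpa only [hF] using hn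

/-- approximation of a continuous linear map between separable
Hilbert spaces by DeepONets, in the `L²(μ)` sense. -/
theorem stmt_3 (H W : Type*) [NormedAddCommGroup H] [InnerProductSpace ℝ H]
    [NormedAddCommGroup W] [InnerProductSpace ℝ W]
    [MeasurableSpace H] [BorelSpace H]
    (e : HilbertBasis ℕ ℝ H) (g : HilbertBasis ℕ ℝ W)
    (μ : Measure H) [IsFiniteMeasure μ]
    (hμ : Integrable (fun x : H => ‖x‖ ^ 2) μ)
    (A : H →L[ℝ] W) (ε : ℝ) (hε : 0 < ε) :
    ∃ (d m : ℕ) (f : EuclideanSpace ℝ (Fin d) → EuclideanSpace ℝ (Fin m)),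
      Continuous f ∧
      Integrable (fun x : H => ‖A x - extMap g m (f (projMap e d x))‖ ^ 2) μ ∧
      ∫ x : H, ‖A x - extMap g m (f (projMap e d x))‖ ^ 2 ∂μ < ε :=
  stmt_3_general H W e g μ hμ A ε hε
end

section
/- Let H and W be real separable Hilbert spaces with Hilbert bases (e_n)_{n∈ℕ} of H and (g_n)_{n∈ℕ} of W, let μ be a finite Borel measure on H with finite second moment, and let G : H → W be a strongly (Bochner) measurable map with ∫_H ‖G(x)‖_W² dμ(x) < ∞. Then for every ε > 0 there exist d, m ∈ ℕ and a continuous function f : ℝ^d → ℝ^m such that the DeepONet F = E_{W,m} ∘ f ∘ P_{H,d} satisfies ∫_H ‖G(x) − F(x)‖_W² dμ(x) < ε. -/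
/-!
Approximate `G` in `L²(μ; W)` by a bounded continuous `Ψ`. If `Pₙ` denotes the orthogonal
projection onto the span of the first `n` vectors of the Hilbert basis (of `H`, resp. `W`),
then `Pₙ ∘ Ψ ∘ Pₙ` is a DeepONet with `d = m = n`. The projections are contractions converging
strongly to the identity, so `Pₙ ∘ Ψ ∘ Pₙ → Ψ` pointwise with the uniform bound `‖Ψ‖`, hence
in `L²(μ)` by dominated convergence.
-/

open MeasureTheory
open scoped RealInnerProductSpace Topology
open Filter

theorem Orthonormal.norm_sum_inner_smul_le {ι E : Type*} [NormedAddCommGroup E]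
    [InnerProductSpace ℝ E] {v : ι → E} (hv : Orthonormal ℝ v) (s : Finset ι) (x : E) :
    ‖∑ i ∈ s, ⟪v i, x⟫ • v i‖ ≤ ‖x‖ := by
  have hsq : ‖∑ i ∈ s, ⟪v i, x⟫ • v i‖ ^ 2 = ∑ i ∈ s, ‖⟪v i, x⟫‖ ^ 2 := by
    rw [← real_inner_self_eq_norm_sq, hv.inner_sum]
    simp [sq]
  exact (pow_le_pow_iff_left₀ (norm_nonneg _) (norm_nonneg _) two_ne_zero).1
    (hsq ▸ hv.sum_inner_products_le x)

namespace HilbertBasis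

variable {E : Type*} [NormedAddCommGroup E] [InnerProductSpace ℝ E] (b : HilbertBasis ℕ ℝ E)

noncomputable def partialSum (n : ℕ) : E →L[ℝ] E :=
  ∑ i : Fin n, (innerSL ℝ (b i)).smulRight (b i)

theorem partialSum_apply (n : ℕ) (x : E) :
    b.partialSum n x = ∑ i : Fin n, ⟪b i, x⟫ • b i := by
  simp [partialSum]

theorem tendsto_partialSum (x : E) : Tendsto (fun n => b.partialSum n x) atTop (𝓝 x) := by
  simpa [partialSum_apply, Fin.sum_univ_eq_sum_range (fun i => ⟪b i, x⟫ • b i),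
    b.repr_apply_apply] using (b.hasSum_repr x).tendsto_sum_nat

theorem norm_partialSum_apply_le (n : ℕ) (x : E) : ‖b.partialSum n x‖ ≤ ‖x‖ := by
  rw [partialSum_apply]
  exact (b.orthonormal.comp _ Fin.val_injective).norm_sum_inner_smul_le _ x

theorem tendsto_partialSum_of_tendsto {y : ℕ → E} {z : E} (hy : Tendsto y atTop (𝓝 z)) :
    Tendsto (fun n => b.partialSum n (y n)) atTop (𝓝 z) := by
  have hsmall : Tendsto (fun n => b.partialSum n (y n - z)) atTop (𝓝 0) :=
    squeeze_zero_norm (fun n => b.norm_partialSum_apply_le n _)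
      (tendsto_iff_norm_sub_tendsto_zero.1 hy)
  simpa using hsmall.add (b.tendsto_partialSum z)

theorem stronglyMeasurable_partialSum_comp {α : Type*} [TopologicalSpace α] [MeasurableSpace α]
    [OpensMeasurableSpace α] {f : α → E} (hf : Continuous f) (n : ℕ) :
    StronglyMeasurable fun x => b.partialSum n (f x) := by
  simp only [partialSum_apply]
  exact Finset.stronglyMeasurable_fun_sum _ fun i _ =>
    (continuous_const.inner hf).stronglyMeasurable.smul_const _

end HilbertBasis

section

variable {α E : Type*} [MeasurableSpace α] {μ : Measure α} [NormedAddCommGroup E]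

theorem tendsto_integral_norm_sub_sq_of_tendsto_of_bounded [IsFiniteMeasure μ]
    {u : ℕ → α → E} {v : α → E} {C : ℝ} (hu : ∀ n, AEStronglyMeasurable (u n) μ)
    (hC : ∀ n x, ‖u n x‖ ≤ C) (hlim : ∀ x, Tendsto (fun n => u n x) atTop (𝓝 (v x))) :
    Tendsto (fun n => ∫ x, ‖v x - u n x‖ ^ 2 ∂μ) atTop (𝓝 0) := by
  have hv : AEStronglyMeasurable v μ :=
    aestronglyMeasurable_of_tendsto_ae atTop hu (ae_of_all _ hlim)
  have hvC (x : α) : ‖v x‖ ≤ C := le_of_tendsto' (hlim x).norm fun n => hC n x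
  have hdiff (n : ℕ) (x : α) : ‖v x - u n x‖ ≤ 2 * C :=
    (norm_sub_le _ _).trans (by linarith [hvC x, hC n x])
  simpa using tendsto_integral_of_dominated_convergence
    (F := fun n x => ‖v x - u n x‖ ^ 2) (f := fun _ => 0) (fun _ => (2 * C) ^ 2)
    (fun n => (hv.sub (hu n)).norm.pow 2) (integrable_const _)
    (fun n => ae_of_all _ fun x => by
      rw [norm_pow, norm_norm]
      exact pow_le_pow_left₀ (norm_nonneg _) (hdiff n x) 2)
    (ae_of_all _ fun x => by
      simpa using (tendsto_const_nhds (x := v x) |>.sub (hlim x)).norm.pow 2)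

theorem integral_norm_sub_sq_le {f g h : α → E} (hf : MemLp f 2 μ) (hg : MemLp g 2 μ)
    (hh : MemLp h 2 μ) :
    ∫ x, ‖f x - h x‖ ^ 2 ∂μ ≤ 2 * ∫ x, ‖f x - g x‖ ^ 2 ∂μ + 2 * ∫ x, ‖g x - h x‖ ^ 2 ∂μ := by
  have hint {u v : α → E} (hu : MemLp u 2 μ) (hv : MemLp v 2 μ) :
      Integrable (fun x => ‖u x - v x‖ ^ 2) μ :=
    (memLp_two_iff_integrable_sq_norm (hu.sub hv).1).1 (hu.sub hv)
  rw [← integral_const_mul, ← integral_const_mul, ← integral_add]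
  · refine integral_mono (hint hf hh) (((hint hf hg).const_mul 2).add ((hint hg hh).const_mul 2))
      fun x => ?_
    have htri := norm_sub_le_norm_sub_add_norm_sub (f x) (g x) (h x)
    nlinarith [norm_nonneg (f x - h x), sq_nonneg (‖f x - g x‖ - ‖g x - h x‖)]
  · exact (hint hf hg).const_mul 2
  · exact (hint hg hh).const_mul 2

end

theorem extMap_toLp_inner {W : Type*} [NormedAddCommGroup W] [InnerProductSpace ℝ W]
    (g : HilbertBasis ℕ ℝ W) (m : ℕ) (y : W) :
    extMap g m (WithLp.toLp 2 fun i => ⟪g i, y⟫) = g.partialSum m y := by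
  rw [HilbertBasis.partialSum_apply]
  rfl

theorem sum_projMap_smul {H : Type*} [NormedAddCommGroup H] [InnerProductSpace ℝ H]
    (e : HilbertBasis ℕ ℝ H) (d : ℕ) (x : H) :
    ∑ j : Fin d, projMap e d x j • e j = e.partialSum d x := by
  simp [projMap, HilbertBasis.partialSum_apply, real_inner_comm]

theorem stmt_4_general (H W : Type*) [NormedAddCommGroup H] [InnerProductSpace ℝ H]
    [NormedAddCommGroup W] [InnerProductSpace ℝ W]
    [MeasurableSpace H] [BorelSpace H]
    (e : HilbertBasis ℕ ℝ H) (g : HilbertBasis ℕ ℝ W)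
    (μ : Measure H) [IsFiniteMeasure μ]
    (G : H → W) (hGmeas : StronglyMeasurable G)
    (hG2 : Integrable (fun x : H => ‖G x‖ ^ 2) μ)
    (ε : ℝ) (hε : 0 < ε) :
    ∃ (d m : ℕ) (f : EuclideanSpace ℝ (Fin d) → EuclideanSpace ℝ (Fin m)),
      Continuous f ∧
      Integrable (fun x : H => ‖G x - extMap g m (f (projMap e d x))‖ ^ 2) μ ∧
      ∫ x : H, ‖G x - extMap g m (f (projMap e d x))‖ ^ 2 ∂μ < ε := by
  have hGm : MemLp G 2 μ := (memLp_two_iff_integrable_sq_norm hGmeas.aestronglyMeasurable).2 hG2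
  obtain ⟨Ψ, hGΨ, hΨ⟩ := (ENNReal.ofReal_ofNat 2 ▸ hGm :
    MemLp G (ENNReal.ofReal 2) μ).exists_boundedContinuous_integral_rpow_sub_le two_pos
      (by positivity : 0 < ε / 4)
  simp only [Real.rpow_two, ENNReal.ofReal_ofNat] at hGΨ hΨ
  set F : ℕ → H → W := fun n x => g.partialSum n (Ψ (e.partialSum n x))
  have hF_meas (n : ℕ) : AEStronglyMeasurable (F n) μ :=
    (g.stronglyMeasurable_partialSum_comp (by fun_prop) n).aestronglyMeasurable
  have hF_bdd (n : ℕ) (x : H) : ‖F n x‖ ≤ ‖Ψ‖ :=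
    (g.norm_partialSum_apply_le n _).trans (Ψ.norm_coe_le_norm _)
  have hF_mem (n : ℕ) : MemLp (F n) 2 μ :=
    .of_bound (hF_meas n) _ (ae_of_all _ (hF_bdd n))
  have hF_lim : Tendsto (fun n => ∫ x, ‖Ψ x - F n x‖ ^ 2 ∂μ) atTop (𝓝 0) :=
    tendsto_integral_norm_sub_sq_of_tendsto_of_bounded hF_meas hF_bdd
      fun x => g.tendsto_partialSum_of_tendsto
        ((Ψ.continuous.tendsto x).comp (e.tendsto_partialSum x))
  obtain ⟨n, hn⟩ := (hF_lim.eventually_lt_const (by positivity : 0 < ε / 4)).exists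
  refine ⟨n, n, fun a => WithLp.toLp 2 fun i => ⟪g i, Ψ (∑ j, a j • e j)⟫, by fun_prop, ?_, ?_⟩
  all_goals simp only [extMap_toLp_inner, sum_projMap_smul]
  · exact (memLp_two_iff_integrable_sq_norm (hGm.sub (hF_mem n)).1).1 (hGm.sub (hF_mem n))
  · calc ∫ x, ‖G x - F n x‖ ^ 2 ∂μ
        ≤ 2 * ∫ x, ‖G x - Ψ x‖ ^ 2 ∂μ + 2 * ∫ x, ‖Ψ x - F n x‖ ^ 2 ∂μ :=
          integral_norm_sub_sq_le hGm hΨ (hF_mem n)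
      _ < ε := by linarith

/-- universal approximation of square-integrable operators by
DeepONets: any strongly measurable, square-integrable map between separable
Hilbert spaces can be `L²(μ)`-approximated by a DeepONet. -/
theorem stmt_4 (H W : Type*) [NormedAddCommGroup H] [InnerProductSpace ℝ H]
    [NormedAddCommGroup W] [InnerProductSpace ℝ W]
    [MeasurableSpace H] [BorelSpace H]
    (e : HilbertBasis ℕ ℝ H) (g : HilbertBasis ℕ ℝ W)
    (μ : Measure H) [IsFiniteMeasure μ]
    (hμ : Integrable (fun x : H => ‖x‖ ^ 2) μ)
    (G : H → W) (hGmeas : StronglyMeasurable G)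
    (hG2 : Integrable (fun x : H => ‖G x‖ ^ 2) μ)
    (ε : ℝ) (hε : 0 < ε) :
    ∃ (d m : ℕ) (f : EuclideanSpace ℝ (Fin d) → EuclideanSpace ℝ (Fin m)),
      Continuous f ∧
      Integrable (fun x : H => ‖G x - extMap g m (f (projMap e d x))‖ ^ 2) μ ∧
      ∫ x : H, ‖G x - extMap g m (f (projMap e d x))‖ ^ 2 ∂μ < ε :=
  stmt_4_general H W e g μ G hGmeas hG2 ε hε
end

section
/- Let H be a real separable Hilbert space and let μ be a Borel probability measure on H with finite second moment. Then there exists a continuous linear operator Q : H → H such that ⟨Q g, h⟩ = ∫_H ⟨f,g⟩ ⟨f,h⟩ dμ(f) for all g, h ∈ H; this Q is self-adjoint (⟨Qg,h⟩ = ⟨g,Qh⟩ for all g,h), non-negative (⟨Qg,g⟩ ≥ 0 for all g), and for every Hilbert basis (e_k)_{k∈ℕ} of H one has ∑_{k=1}^∞ ⟨Q e_k, e_k⟩ = ∫_H ‖f‖² dμ(f) < ∞; in particular Q is trace class. -/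
open MeasureTheory
open scoped RealInnerProductSpace

/-- existence of the covariance operator of a Borel
probability measure with finite second moment on a separable Hilbert space;
it is self-adjoint, non-negative, and of trace `∫ ‖f‖² dμ(f) < ∞` in any
Hilbert basis (in particular it is trace class). -/
theorem stmt_7 (H : Type*) [NormedAddCommGroup H] [InnerProductSpace ℝ H]
    [CompleteSpace H] [TopologicalSpace.SeparableSpace H]
    [MeasurableSpace H] [BorelSpace H]
    (μ : Measure H) [IsProbabilityMeasure μ]
    (hμ : Integrable (fun x : H => ‖x‖ ^ 2) μ) :
    ∃ Q : H →L[ℝ] H,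
      (∀ g h : H, ⟪Q g, h⟫ = ∫ f : H, ⟪f, g⟫ * ⟪f, h⟫ ∂μ) ∧
      (∀ g h : H, ⟪Q g, h⟫ = ⟪g, Q h⟫) ∧
      (∀ g : H, 0 ≤ ⟪Q g, g⟫) ∧
      (∀ e : HilbertBasis ℕ ℝ H,
        HasSum (fun k : ℕ => ⟪Q (e k), e k⟫) (∫ f : H, ‖f‖ ^ 2 ∂μ)) := by
  have hmeas : ∀ g h : H, AEStronglyMeasurable (fun f : H => ⟪f, g⟫ * ⟪f, h⟫) μ := fun g h =>
    ((continuous_id.inner continuous_const).mul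
      (continuous_id.inner continuous_const)).aestronglyMeasurable
  have hint : ∀ g h : H, Integrable (fun f : H => ⟪f, g⟫ * ⟪f, h⟫) μ := by
    intro g h
    refine (hμ.const_mul (‖g‖ * ‖h‖)).mono' (hmeas g h) ?_
    filter_upwards with f
    have h1 := abs_real_inner_le_norm f g
    have h2 := abs_real_inner_le_norm f h
    have h3 : ‖⟪f, g⟫ * ⟪f, h⟫‖ = |⟪f, g⟫| * |⟪f, h⟫| := by
      rw [Real.norm_eq_abs, abs_mul]
    rw [h3]
    nlinarith [abs_nonneg ⟪f, g⟫, abs_nonneg ⟪f, h⟫, norm_nonneg f, norm_nonneg g, norm_nonneg h]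
  -- the bilinear form
  set C := ∫ f : H, ‖f‖ ^ 2 ∂μ with hC
  have hbound : ∀ g h : H, ‖∫ f : H, ⟪f, g⟫ * ⟪f, h⟫ ∂μ‖ ≤ C * ‖g‖ * ‖h‖ := by
    intro g h
    calc ‖∫ f : H, ⟪f, g⟫ * ⟪f, h⟫ ∂μ‖ ≤ ∫ f : H, ‖⟪f, g⟫ * ⟪f, h⟫‖ ∂μ :=
          norm_integral_le_integral_norm _
      _ ≤ ∫ f : H, ‖f‖ ^ 2 * (‖g‖ * ‖h‖) ∂μ := by
          refine integral_mono (hint g h).norm (hμ.mul_const _) fun f => ?_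
          have h1 := abs_real_inner_le_norm f g
          have h2 := abs_real_inner_le_norm f h
          have h3 : ‖⟪f, g⟫ * ⟪f, h⟫‖ = |⟪f, g⟫| * |⟪f, h⟫| := by
            rw [Real.norm_eq_abs, abs_mul]
          rw [h3]
          nlinarith [abs_nonneg ⟪f, g⟫, abs_nonneg ⟪f, h⟫, norm_nonneg f, norm_nonneg g,
            norm_nonneg h]
      _ = C * ‖g‖ * ‖h‖ := by rw [integral_mul_const, hC]; ring
  let B₀ : H →ₛₗ[starRingEnd ℝ] H →ₗ[ℝ] ℝ :=
    LinearMap.mk₂'ₛₗ (starRingEnd ℝ) (RingHom.id ℝ)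
      (fun g h => ∫ f : H, ⟪f, g⟫ * ⟪f, h⟫ ∂μ)
      (by
        intro g g' h
        simp_rw [inner_add_right, add_mul]
        exact integral_add (hint g h) (hint g' h))
      (by
        intro c g h
        simp only [starRingEnd_apply, star_trivial, smul_eq_mul]
        simp_rw [real_inner_smul_right, mul_assoc]
        exact integral_const_mul c _)
      (by
        intro g h h'
        simp_rw [inner_add_right, mul_add]
        exact integral_add (hint g h) (hint g h'))
      (by
        intro c g h
        simp only [smul_eq_mul]
        simp_rw [real_inner_smul_right, mul_left_comm]
        exact integral_const_mul c _)
  let B : H →L⋆[ℝ] H →L[ℝ] ℝ := LinearMap.mkContinuous₂ B₀ C fun g h => hbound g h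
  have hB : ∀ g h : H, B g h = ∫ f : H, ⟪f, g⟫ * ⟪f, h⟫ ∂μ := fun g h => rfl
  refine ⟨InnerProductSpace.continuousLinearMapOfBilin B, ?_, ?_, ?_, ?_⟩
  case _ =>
    intro g h
    rw [InnerProductSpace.continuousLinearMapOfBilin_apply, hB]
  case _ =>
    intro g h
    rw [InnerProductSpace.continuousLinearMapOfBilin_apply, hB]
    conv_rhs => rw [real_inner_comm (InnerProductSpace.continuousLinearMapOfBilin B h) g,
      InnerProductSpace.continuousLinearMapOfBilin_apply, hB]
    exact integral_congr_ae (Filter.Eventually.of_forall fun f => mul_comm _ _)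
  case _ =>
    intro g
    rw [InnerProductSpace.continuousLinearMapOfBilin_apply, hB]
    exact integral_nonneg fun f => mul_self_nonneg _
  case _ =>
    intro e
    have hspec : ∀ k : ℕ, ⟪InnerProductSpace.continuousLinearMapOfBilin B (e k), e k⟫
        = ∫ f : H, ⟪f, e k⟫ * ⟪f, e k⟫ ∂μ := fun k => by
      rw [InnerProductSpace.continuousLinearMapOfBilin_apply, hB]
    simp_rw [hspec]
    -- summability of the integrals
    have hsum : Summable fun k : ℕ => ∫ f : H, ‖(fun f : H => ⟪f, e k⟫ * ⟪f, e k⟫) f‖ ∂μ := by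
      refine summable_of_sum_range_le (c := C) (fun k => integral_nonneg fun f => norm_nonneg _)
        fun n => ?_
      rw [← integral_finset_sum _ fun i _ => (hint (e i) (e i)).norm]
      refine integral_mono (integrable_finset_sum _ fun i _ => (hint (e i) (e i)).norm) hμ
        fun f => ?_
      calc ∑ i ∈ Finset.range n, ‖⟪f, e i⟫ * ⟪f, e i⟫‖
          = ∑ i ∈ Finset.range n, ‖⟪(e : ℕ → H) i, f⟫‖ ^ 2 := by
            refine Finset.sum_congr rfl fun i _ => ?_
            rw [sq, ← norm_mul, real_inner_comm ((e : ℕ → H) i) f]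
        _ ≤ ‖f‖ ^ 2 := (e.orthonormal).sum_inner_products_le f
    have := hasSum_integral_of_summable_integral_norm
      (F := fun k (f : H) => ⟪f, e k⟫ * ⟪f, e k⟫) (fun k => hint (e k) (e k)) hsum
    have heq : ∫ f : H, (∑' k : ℕ, ⟪f, e k⟫ * ⟪f, e k⟫) ∂μ = ∫ f : H, ‖f‖ ^ 2 ∂μ := by
      refine integral_congr_ae (Filter.Eventually.of_forall fun f => ?_)
      have h1 : HasSum (fun k : ℕ => ⟪f, e k⟫ * ⟪e k, f⟫) ⟪f, f⟫ := e.hasSum_inner_mul_inner f f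
      have h2 : (fun k : ℕ => ⟪f, e k⟫ * ⟪e k, f⟫) = fun k : ℕ => ⟪f, e k⟫ * ⟪f, e k⟫ := by
        funext k; rw [real_inner_comm f (e k)]
      rw [h2] at h1
      exact h1.tsum_eq.trans (real_inner_self_eq_norm_sq f)
    rw [heq] at this
    exact this
end

section
/- Let H be a real separable Hilbert space, let μ be a Borel probability measure on H with finite second moment, and let Q : H → H be its covariance operator, i.e. the continuous linear operator satisfying ⟨Q g, h⟩ = ∫_H ⟨f,g⟩ ⟨f,h⟩ dμ(f) for all g, h ∈ H. Suppose (e_k)_{k∈ℕ} is a Hilbert basis of H consisting of eigenvectors of Q, with Q e_k = α_k e_k for real numbers α_k. Then for every d ∈ ℕ one has ∫_H ‖ f − ∑_{k=1}^{d} ⟨f, e_k⟩ e_k ‖² dμ(f) = ∑_{k=d+1}^{∞} α_k. -/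
open MeasureTheory
open scoped RealInnerProductSpace

/-- if the covariance operator `Q` of a probability measure
`μ` with finite second moment is diagonalized by a Hilbert basis `(e_k)` with
eigenvalues `(α_k)`, then the mean-square error of the orthogonal projection
onto the span of the first `d` basis vectors equals the tail sum of the
eigenvalues. -/
theorem stmt_8 (H : Type*) [NormedAddCommGroup H] [InnerProductSpace ℝ H]
    [MeasurableSpace H] [BorelSpace H]
    (μ : Measure H) [IsProbabilityMeasure μ]
    (hμ : Integrable (fun x : H => ‖x‖ ^ 2) μ)
    (Q : H →L[ℝ] H)
    (hQ : ∀ g h : H, ⟪Q g, h⟫ = ∫ f : H, ⟪f, g⟫ * ⟪f, h⟫ ∂μ)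
    (e : HilbertBasis ℕ ℝ H) (α : ℕ → ℝ) (hα : ∀ k : ℕ, Q (e k) = α k • e k)
    (d : ℕ) :
    ∫ f : H, ‖f - ∑ k ∈ Finset.range d, ⟪f, e k⟫ • e k‖ ^ 2 ∂μ
      = ∑' k : ℕ, α (d + k) := by
  classical
  have hee : ∀ i j : ℕ, ⟪e i, e j⟫ = if i = j then (1:ℝ) else 0 := by
    intro i j
    exact orthonormal_iff_ite.mp e.orthonormal i j
  -- eigenvalue formula
  have hαval : ∀ k, α k = ∫ f, ⟪f, e k⟫ ^ 2 ∂μ := by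
    intro k
    have h1 := hQ (e k) (e k)
    rw [hα k, real_inner_smul_left, hee k k] at h1
    simpa [sq] using h1
  -- measurability and integrability of the coefficient squares
  have hcont : ∀ i : ℕ, Continuous fun f : H => ⟪f, e i⟫ ^ 2 := fun i =>
    (continuous_id.inner continuous_const).pow 2
  have hint : ∀ i : ℕ, Integrable (fun f : H => ⟪f, e i⟫ ^ 2) μ := by
    intro i
    refine hμ.mono' (hcont i).aestronglyMeasurable ?_
    filter_upwards with f
    have h2 : |⟪f, e i⟫| ≤ ‖f‖ := by
      simpa [e.orthonormal.1 i] using abs_real_inner_le_norm f (e i)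
    calc ‖⟪f, e i⟫ ^ 2‖ = ⟪f, e i⟫ ^ 2 := Real.norm_of_nonneg (sq_nonneg _)
      _ = |⟪f, e i⟫| ^ 2 := (sq_abs _).symm
      _ ≤ ‖f‖ ^ 2 := pow_le_pow_left₀ (abs_nonneg _) h2 2
  -- nonnegativity of eigenvalues
  have hαnonneg : ∀ k, 0 ≤ α k := fun k => by
    rw [hαval k]; exact integral_nonneg fun f => sq_nonneg _
  -- summability of the tail eigenvalues
  have hsum : Summable fun k : ℕ => α (d + k) := by
    refine summable_of_sum_range_le (c := ∫ f, ‖f‖ ^ 2 ∂μ)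
      (fun k => hαnonneg _) ?_
    intro n
    have horth : Orthonormal ℝ fun k : ℕ => e (d + k) :=
      e.orthonormal.comp _ (add_right_injective d)
    calc ∑ k ∈ Finset.range n, α (d + k)
        = ∫ f, ∑ k ∈ Finset.range n, ⟪f, e (d + k)⟫ ^ 2 ∂μ := by
          rw [integral_finset_sum _ fun k _ => hint (d + k)]
          exact Finset.sum_congr rfl fun k _ => hαval (d + k)
      _ ≤ ∫ f, ‖f‖ ^ 2 ∂μ := by
          refine integral_mono (integrable_finset_sum _ fun k _ => hint (d + k)) hμ ?_
          intro f
          have := horth.sum_inner_products_le (x := f) (s := Finset.range n)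
          simpa [Real.norm_eq_abs, sq_abs, real_inner_comm] using this
  -- pointwise identity
  have key : ∀ f : H, ‖f - ∑ k ∈ Finset.range d, ⟪f, e k⟫ • e k‖ ^ 2
      = ∑' k : ℕ, ⟪f, e (d + k)⟫ ^ 2 := by
    intro f
    set g := f - ∑ k ∈ Finset.range d, ⟪f, e k⟫ • e k with hg
    have hcoef : ∀ i : ℕ, ⟪g, e i⟫ = if i < d then 0 else ⟪f, e i⟫ := by
      intro i
      rw [hg, inner_sub_left, sum_inner]
      have : ∑ k ∈ Finset.range d, ⟪⟪f, e k⟫ • e k, e i⟫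
          = if i < d then ⟪f, e i⟫ else 0 := by
        simp only [real_inner_smul_left, hee]
        simp [Finset.sum_ite_eq, Finset.mem_range]
      rw [this]
      split <;> ring
    have h1 : ‖g‖ ^ 2 = ∑' i : ℕ, ⟪g, e i⟫ ^ 2 := by
      rw [← real_inner_self_eq_norm_sq, ← e.tsum_inner_mul_inner g g]
      exact tsum_congr fun i => by rw [real_inner_comm (e i) g, sq]
    have h2 : ∑' k : ℕ, ⟪g, e (d + k)⟫ ^ 2 = ∑' i : ℕ, ⟪g, e i⟫ ^ 2 := by
      refine Function.Injective.tsum_eq (f := fun i : ℕ => ⟪g, e i⟫ ^ 2) (g := fun k : ℕ => d + k)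
        (add_right_injective d) ?_
      intro i hi
      by_contra hne
      have hne' : ⟪g, e i⟫ ^ 2 ≠ 0 := hi
      have hid : d ≤ i := by
        by_contra hlt
        exact hne' (by rw [hcoef i, if_pos (by omega)]; ring)
      exact hne ⟨i - d, show d + (i - d) = i by omega⟩
    rw [h1, ← h2]
    refine tsum_congr fun k => ?_
    rw [hcoef (d + k), if_neg (by omega)]
  calc ∫ f, ‖f - ∑ k ∈ Finset.range d, ⟪f, e k⟫ • e k‖ ^ 2 ∂μ
      = ∫ f, ∑' k : ℕ, ⟪f, e (d + k)⟫ ^ 2 ∂μ := by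
        exact integral_congr_ae (Filter.Eventually.of_forall key)
    _ = ∑' k : ℕ, ∫ f, ⟪f, e (d + k)⟫ ^ 2 ∂μ := by
        refine (integral_tsum_of_summable_integral_norm (fun k => hint (d + k)) ?_).symm
        have : (fun k : ℕ => ∫ f, ‖⟪f, e (d + k)⟫ ^ 2‖ ∂μ) = fun k => α (d + k) := by
          funext k
          rw [hαval (d + k)]
          exact integral_congr_ae (Filter.Eventually.of_forall fun f =>
            Real.norm_of_nonneg (sq_nonneg _))
        rw [this]
        exact hsum
    _ = ∑' k : ℕ, α (d + k) := tsum_congr fun k => (hαval (d + k)).symm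
end
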